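/- arXiv:2402.01249 — 2 statements merged into one kernel-verified Lean document; each statement's English description precedes it below -/
import Mathlib

section
/- A complete pencil α is a point pencil if and only if α has nonvoid intersection with every regular parallel pencil l*. -/
/-!
Two distinct lines of a complete pencil `α` lie in a common regular pencil: `Q*` if they
meet in `Q`, `m*` if they are parallel; so `α` is `Q*` or `m*`. A point pencil meets every
`l*` by the parallel postulate. A parallel pencil `m*` misses `k*` for any line `k` crossing
`m`: a common line `n` would satisfy `n ∥ m`, `n ∥ k`, so by `par_int` it would cross itself.
-/

/-- An incidence plane: points, lines, and an incidence relation. -/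
structure IncidencePlane where
  Point : Type
  Line : Type
  mem : Point → Line → Prop

namespace IncidencePlane

variable (G : IncidencePlane)

/-- Lines `l` and `m` intersect: they are distinct and have a common point. -/
def Intersect (l m : G.Line) : Prop := l ≠ m ∧ ∃ Q, G.mem Q l ∧ G.mem Q m

/-- Parallel is the negation of intersecting. -/
def Par (l m : G.Line) : Prop := ¬ G.Intersect l m

/-- The point set of a line. -/
def lineSet (l : G.Line) : Set G.Point := {Q | G.mem Q l}

/-- The pencil of all lines through a point `Q`, written `Q*`. -/
def pointPencil (Q : G.Point) : Set G.Line := {l | G.mem Q l}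

/-- The pencil of all lines parallel to `l`, written `l*`. -/
def parPencil (l : G.Line) : Set G.Line := {m | G.Par m l}

/-- A regular pencil has the form `Q*` or `l*`. -/
def Regular (ρ : Set G.Line) : Prop :=
  (∃ Q, ρ = G.pointPencil Q) ∨ (∃ l, ρ = G.parPencil l)

/-- A pencil: (1) it cannot contain fewer than two lines; (2) two distinct
lines of it lying in a regular pencil `ρ` force inclusion in `ρ`. -/
def IsPencil (α : Set G.Line) : Prop :=
  (¬ ∀ l ∈ α, ∀ m ∈ α, l = m) ∧
  (∀ ρ : Set G.Line, G.Regular ρ → ∀ l ∈ α, ∀ m ∈ α, l ≠ m → l ∈ ρ → m ∈ ρ → α ⊆ ρ)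

/-- A complete pencil: two distinct lines of it in a regular pencil `ρ` force equality with `ρ`. -/
def Complete (α : Set G.Line) : Prop :=
  ∀ ρ : Set G.Line, G.Regular ρ → ∀ l ∈ α, ∀ m ∈ α, l ≠ m → l ∈ ρ → m ∈ ρ → α = ρ

/-- A strictly complete pencil: contained in a regular pencil implies equal to it. -/
def StrictlyComplete (α : Set G.Line) : Prop :=
  ∀ ρ : Set G.Line, G.Regular ρ → α ⊆ ρ → α = ρ

/-- `l` lies outside the family `α`: it differs from every line of `α`. -/
def LineOutside (l : G.Line) (α : Set G.Line) : Prop := ∀ m ∈ α, l ≠ m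

/-- Pencils `α` and `β` are distinct: some line of one lies outside the other. -/
def PDistinct (α β : Set G.Line) : Prop :=
  (∃ l ∈ α, G.LineOutside l β) ∨ (∃ l ∈ β, G.LineOutside l α)

/-- Pencils are equivalent when they are contained in exactly the same regular pencils. -/
def PEquiv (α β : Set G.Line) : Prop :=
  ∀ ρ : Set G.Line, G.Regular ρ → (α ⊆ ρ ↔ β ⊆ ρ)

/-- A parallel pencil: a pencil any two of whose lines are parallel. -/
def ParallelPencil (α : Set G.Line) : Prop :=
  G.IsPencil α ∧ ∀ l ∈ α, ∀ m ∈ α, G.Par l m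

/-- Point `Q` lies outside line `l`: it differs from every point of `l`. -/
def PointOutside (Q : G.Point) (l : G.Line) : Prop := ∀ R, G.mem R l → Q ≠ R

/-- The union of all pencils equivalent to `α` (the full pencil `α'`). -/
def fullPencil (α : Set G.Line) : Set G.Line :=
  ⋃₀ {β | G.IsPencil β ∧ G.PEquiv β α}

/-- The core of two pencils: points lying on a common line of the two pencils. -/
def core (α β : Set G.Line) : Set G.Point :=
  {Q | ∃ l, l ∈ α ∩ β ∧ G.mem Q l}

/-- A virtual line: a set of points which is a line whenever it is inhabited. -/
def VLine (p : Set G.Point) : Prop :=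
  p.Nonempty → ∃ l : G.Line, p = G.lineSet l

/-- Distinctness of virtual lines. -/
def VDistinct (p q : Set G.Point) : Prop :=
  ¬ (p = q) ∧ ∀ l m : G.Line, p = G.lineSet l → q = G.lineSet m → l ≠ m

/-- Equivalence of virtual lines: the negation of distinctness. -/
def VEquiv (p q : Set G.Point) : Prop := ¬ G.VDistinct p q

/-- The union of all virtual lines equivalent to `p`. -/
def vfull (p : Set G.Point) : Set G.Point :=
  ⋃₀ {q | G.VLine q ∧ G.VEquiv q p}

/-- The axioms of an incidence plane used in this paper. -/
structure Axioms (G : IncidencePlane) : Prop where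
  join : ∀ Q R : G.Point, Q ≠ R → ∃ l, G.mem Q l ∧ G.mem R l
  join_unique : ∀ Q R : G.Point, Q ≠ R → ∀ l m : G.Line,
      G.mem Q l → G.mem R l → G.mem Q m → G.mem R m → l = m
  cross_unique : ∀ l m : G.Line, l ≠ m → ∀ Q R : G.Point,
      G.mem Q l → G.mem Q m → G.mem R l → G.mem R m → Q = R
  parPost : ∀ (Q : G.Point) (l : G.Line), ∃ n, G.mem Q n ∧ G.Par n l
  parPost_unique : ∀ (Q : G.Point) (l : G.Line) (n n' : G.Line),
      G.mem Q n → G.Par n l → G.mem Q n' → G.Par n' l → n = n'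
  par_int : ∀ n₁ n₂ l m : G.Line,
      G.Par n₁ l → G.Par n₂ m → G.Intersect l m → G.Intersect n₁ n₂
  not_pointOutside : ∀ (Q : G.Point) (l : G.Line), ¬ G.PointOutside Q l → G.mem Q l
  two_points : ∀ l : G.Line, ∃ Q R : G.Point, Q ≠ R ∧ G.mem Q l ∧ G.mem R l
  exists_intersecting : ∃ l m : G.Line, G.Intersect l m

end IncidencePlane

open IncidencePlane

namespace IncidencePlane

variable {G : IncidencePlane}

theorem not_intersect_self (l : G.Line) : ¬ G.Intersect l l :=
  fun h => h.1 rfl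

theorem par_self (l : G.Line) : G.Par l l :=
  not_intersect_self l

theorem Complete.regular {α : Set G.Line} (hα : G.IsPencil α) (hc : G.Complete α) :
    G.Regular α := by
  obtain ⟨l, hl, m, hm, hlm⟩ : ∃ l ∈ α, ∃ m ∈ α, l ≠ m := by
    simpa only [not_forall, exists_prop] using hα.1
  by_cases hint : G.Intersect l m
  · obtain ⟨-, Q, hQl, hQm⟩ := hint
    exact Or.inl ⟨Q, hc _ (Or.inl ⟨Q, rfl⟩) l hl m hm hlm hQl hQm⟩
  · exact Or.inr ⟨m, hc _ (Or.inr ⟨m, rfl⟩) l hl m hm hlm hint (par_self m)⟩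

namespace Axioms

variable (ax : G.Axioms)
include ax

theorem pointPencil_inter_parPencil_nonempty (Q : G.Point) (l : G.Line) :
    (G.pointPencil Q ∩ G.parPencil l).Nonempty :=
  ax.parPost Q l

theorem exists_intersect (m : G.Line) : ∃ k, G.Intersect m k := by
  obtain ⟨a, b, hab⟩ := ax.exists_intersecting
  by_contra! h
  exact not_intersect_self m (ax.par_int m m a b (h a) (h b) hab)

theorem parPencil_inter_parPencil_eq_empty {m k : G.Line} (hmk : G.Intersect m k) :
    G.parPencil m ∩ G.parPencil k = ∅ :=
  Set.eq_empty_of_forall_notMem fun n ⟨hnm, hnk⟩ =>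
    not_intersect_self n (ax.par_int n n m k hnm hnk hmk)

theorem exists_parPencil_inter_parPencil_eq_empty (m : G.Line) :
    ∃ k, G.parPencil m ∩ G.parPencil k = ∅ :=
  (ax.exists_intersect m).imp fun _ => ax.parPencil_inter_parPencil_eq_empty

end Axioms

end IncidencePlane

/-- a complete pencil is a point pencil iff it meets every regular
parallel pencil. -/
theorem complete_point_pencil_iff (G : IncidencePlane) (ax : G.Axioms)
    (α : Set G.Line) (hα : G.IsPencil α) (hc : G.Complete α) :
    (∃ Q : G.Point, α = G.pointPencil Q) ↔
      ∀ l : G.Line, (α ∩ G.parPencil l).Nonempty := by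
  constructor
  · rintro ⟨Q, rfl⟩
    exact ax.pointPencil_inter_parPencil_nonempty Q
  · intro hmeet
    refine (Complete.regular hα hc).resolve_right ?_
    rintro ⟨m, rfl⟩
    obtain ⟨k, hk⟩ := ax.exists_parPencil_inter_parPencil_eq_empty m
    exact (hmeet k).ne_empty hk
end

section
/- If pencils α and β satisfy ¬(α ≠ β), then α ≈ β; conversely, if α ≈ β with α complete and β strictly complete, then ¬(α ≠ β). -/
/-!
Classically, `¬(α ≠ β)` just says `α = β`. A complete pencil is regular, since any two of its
distinct lines lie in a common regular pencil; so if `α` is complete and `β ≈ α`, then `β`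
lies in the regular pencil `α` and strict completeness gives `β = α`.
-/

namespace IncidencePlane

variable {G : IncidencePlane}

theorem not_pDistinct_iff_eq {α β : Set G.Line} : ¬ G.PDistinct α β ↔ α = β := by
  simp only [PDistinct, LineOutside, not_or, not_exists, not_and, not_forall, not_not]
  constructor
  · rintro ⟨hαβ, hβα⟩
    exact Set.Subset.antisymm
      (fun l hl => by obtain ⟨m, hm, rfl⟩ := hαβ l hl; exact hm)
      (fun l hl => by obtain ⟨m, hm, rfl⟩ := hβα l hl; exact hm)
  · rintro rfl
    exact ⟨fun l hl => ⟨l, hl, rfl⟩, fun l hl => ⟨l, hl, rfl⟩⟩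

theorem IsPencil.exists_ne {α : Set G.Line} (hα : G.IsPencil α) :
    ∃ l ∈ α, ∃ m ∈ α, l ≠ m := by
  by_contra! h
  exact hα.1 h

theorem exists_regular_mem_mem (l m : G.Line) : ∃ ρ, G.Regular ρ ∧ l ∈ ρ ∧ m ∈ ρ := by
  by_cases hlm : G.Intersect l m
  · obtain ⟨-, Q, hQl, hQm⟩ := hlm
    exact ⟨G.pointPencil Q, Or.inl ⟨Q, rfl⟩, hQl, hQm⟩
  · -- `m ∈ m*` because `Intersect` requires distinct lines
    exact ⟨G.parPencil m, Or.inr ⟨m, rfl⟩, hlm, fun hmm => hmm.1 rfl⟩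

theorem Complete.exists_regular_eq {α : Set G.Line} (hα : G.IsPencil α) (hc : G.Complete α) :
    ∃ ρ, G.Regular ρ ∧ α = ρ := by
  obtain ⟨l, hl, m, hm, hlm⟩ := hα.exists_ne
  obtain ⟨ρ, hρ, hlρ, hmρ⟩ := exists_regular_mem_mem l m
  exact ⟨ρ, hρ, hc ρ hρ l hl m hm hlm hlρ hmρ⟩

end IncidencePlane

open IncidencePlane

theorem not_distinct_equiv_general (G : IncidencePlane)
    (α β : Set G.Line) (hα : G.IsPencil α) :
    (¬ G.PDistinct α β → G.PEquiv α β) ∧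
    (G.PEquiv α β → G.Complete α → G.StrictlyComplete β →
      ¬ G.PDistinct α β) := by
  refine ⟨fun h ρ _ => by rw [not_pDistinct_iff_eq.mp h], fun hequiv hc hsc => ?_⟩
  obtain ⟨ρ, hρ, rfl⟩ := Complete.exists_regular_eq hα hc
  have hβ : β = α := hsc α hρ ((hequiv α hρ).mp subset_rfl)
  exact not_pDistinct_iff_eq.mpr hβ.symm

/-- ¬(α ≠ β) implies α ≈ β; conversely, α ≈ β with α complete
and β strictly complete implies ¬(α ≠ β). -/
theorem not_distinct_equiv (G : IncidencePlane) (ax : G.Axioms)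
    (α β : Set G.Line) (hα : G.IsPencil α) (hβ : G.IsPencil β) :
    (¬ G.PDistinct α β → G.PEquiv α β) ∧
    (G.PEquiv α β → G.Complete α → G.StrictlyComplete β →
      ¬ G.PDistinct α β) :=
  not_distinct_equiv_general G α β hα
end
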